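/- Let q be an odd prime power and n an even positive integer coprime to q with n' = n/2 odd. Then every orbit of the translation τ_{n'}: i ↦ i+n' on the set of q-cyclotomic cosets of Z/nZ has length exactly 2; in particular there exists a μ_q-invariant subset P ⊆ Z/nZ with Z/nZ = P ⊔ (P + n') a disjoint union. -/
import Mathlib


/-- The `q`-cyclotomic coset of `ℤ/nℤ` containing `i`: the orbit of `i` under `μ_q : i ↦ qi`. -/
def qCoset (q n : ℕ) (i : ZMod n) : Set (ZMod n) :=
  {j | ∃ k : ℕ, j = (q : ZMod n) ^ k * i}

/-- for `n` even with `n' = n/2` odd and `q` an odd prime power coprime to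
`n`, the translation `τ_{n'} : i ↦ i + n'` moves every `q`-cyclotomic coset (and has
order 2 on cosets), so every `τ_{n'}`-orbit on cosets has length exactly 2; in
particular there is a `μ_q`-invariant `P ⊆ ℤ/nℤ` with `ℤ/nℤ = P ⊔ (P + n')`. -/
theorem stmt18 (q : ℕ) (hq : ∃ p k : ℕ, p.Prime ∧ 0 < k ∧ q = p ^ k) (hodd : Odd q)
    (n n' : ℕ) [NeZero n] (hn : n = 2 * n') (hn' : Odd n')
    (hcop : Nat.Coprime q n) :
    (∀ i : ZMod n,
      (fun j => j + (n' : ZMod n)) '' qCoset q n i ≠ qCoset q n i ∧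
      (fun j => j + (n' : ZMod n)) '' ((fun j => j + (n' : ZMod n)) '' qCoset q n i) =
        qCoset q n i) ∧
    ∃ P : Finset (ZMod n),
      P.image (fun i => (q : ZMod n) * i) = P ∧
      P.image (fun i => i + (n' : ZMod n)) = Pᶜ := by
  have h2 : (2 : ℕ) ∣ n := ⟨n', hn⟩
  set φ : ZMod n →+* ZMod 2 := ZMod.castHom h2 (ZMod 2) with hφ
  have hq2 : φ (q : ZMod n) = 1 := by
    rw [map_natCast]
    have : q % 2 = 1 := Nat.odd_iff.mp hodd
    rw [← ZMod.natCast_mod, this, Nat.cast_one]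
  have hn'2 : φ (n' : ZMod n) = 1 := by
    rw [map_natCast]
    have : n' % 2 = 1 := Nat.odd_iff.mp hn'
    rw [← ZMod.natCast_mod, this, Nat.cast_one]
  have htwo : (n' : ZMod n) + (n' : ZMod n) = 0 := by
    have : ((2 * n' : ℕ) : ZMod n) = 0 := by rw [← hn]; exact ZMod.natCast_self n
    push_cast at this
    linear_combination this
  constructor
  · intro i
    constructor
    · intro h
      have hi : i ∈ qCoset q n i := ⟨0, by simp⟩
      have : i + (n' : ZMod n) ∈ qCoset q n i := by
        rw [← h]; exact ⟨i, hi, rfl⟩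
      obtain ⟨k, hk⟩ := this
      have := congrArg φ hk
      rw [map_add, map_mul, map_pow, hq2, hn'2, one_pow, one_mul] at this
      have : (1 : ZMod 2) = 0 := by linear_combination this
      exact one_ne_zero this
    · rw [Set.image_image]
      have : (fun x : ZMod n => x + (n' : ZMod n) + (n' : ZMod n)) = id := by
        funext x; simp [add_assoc, htwo]
      rw [this, Set.image_id]
  · obtain ⟨u, hu⟩ := (ZMod.isUnit_iff_coprime q n).mpr hcop
    refine ⟨Finset.univ.filter (fun i => φ i = 0), ?_, ?_⟩
    · ext j
      simp only [Finset.mem_image, Finset.mem_filter, Finset.mem_univ, true_and]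
      constructor
      · rintro ⟨i, hi, rfl⟩
        rw [map_mul, hq2, one_mul, hi]
      · intro hj
        refine ⟨(u⁻¹ : (ZMod n)ˣ) * j, ?_, ?_⟩
        · rw [map_mul, hj, mul_zero]
        · rw [← mul_assoc, ← hu]; simp
    · ext j
      simp only [Finset.mem_image, Finset.mem_filter, Finset.mem_univ, true_and,
        Finset.mem_compl]
      constructor
      · rintro ⟨i, hi, rfl⟩ hj
        rw [map_add, hi, hn'2, zero_add] at hj
        exact one_ne_zero hj
      · intro hj
        refine ⟨j + (n' : ZMod n), ?_, by rw [add_assoc, htwo, add_zero]⟩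
        have : φ j = 1 := by
          have := hj
          revert this
          generalize φ j = x
          revert x
          decide
        rw [map_add, this, hn'2]
        decide
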